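/- Let ψ be a bispecial transformation of type (m₋, m₊) between (Y₋, H₋) and (Y₊, H₊). If Pic(Y₋) and Pic(Y₊) have rank one, then H₋ and H₊ are the ample generators of the respective Picard groups; more precisely, denoting by [e_±] the numerical class of a line in a nontrivial fiber of π_± and by [ℓ_∓] = π_{∓*}[e_±] the class of its image in Y_∓, one has [ℓ_∓] · H_∓ = 1. -/

import Mathlib

noncomputable section

/-- The divisor-class data of a **bispecial transformation** `ψ : Y₋ ⇢ Y₊` of
type `(m₋, m₊)` between smooth polarized pairs `(Y₋, H₋)` and `(Y₊, H₊)` of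
dimension `n` (`Y_±` smooth complex projective varieties, `H_±` ample line
bundles):  `ψ` is a birational map resolved by two blowups `π_± : W → Y_±`
along smooth subvarieties `Z_± ⊂ Y_±`, with exceptional divisors
`E_± = π_±⁻¹(Z_±)` satisfying the linear equivalences
`π₊*H₊ ~ m₋·π₋*H₋ − E₋` and `π₋*H₋ ~ m₊·π₊*H₊ − E₊`.
The fields record the Picard groups of `W`, `Y₋`, `Y₊` and the relevant
divisor classes; all other geometric notions appearing in the statements are
further fields with their intended meaning described in their docstrings. -/
structure BispecialTransformation where
  /-- The common dimension of `Y₋`, `Y₊` and `W`. -/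
  n : ℕ
  /-- The Picard group of the resolution `W`. -/
  PicW : Type
  /-- The Picard group of `Y₋`. -/
  PicYm : Type
  /-- The Picard group of `Y₊`. -/
  PicYp : Type
  [grpW : AddCommGroup PicW]
  [grpYm : AddCommGroup PicYm]
  [grpYp : AddCommGroup PicYp]
  /-- Ampleness of divisor classes on `Y₋`. -/
  AmpleYm : PicYm → Prop
  /-- Ampleness of divisor classes on `Y₊`. -/
  AmpleYp : PicYp → Prop
  /-- The polarization `H₋` of `Y₋`. -/
  Hm : PicYm
  /-- The polarization `H₊` of `Y₊`. -/
  Hp : PicYp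
  ampleHm : AmpleYm Hm
  ampleHp : AmpleYp Hp
  /-- Pullback of divisor classes along the blowup `π₋ : W → Y₋`. -/
  pullm : PicYm →+ PicW
  /-- Pullback of divisor classes along the blowup `π₊ : W → Y₊`. -/
  pullp : PicYp →+ PicW
  /-- The class of the exceptional divisor `E₋ = π₋⁻¹(Z₋)`. -/
  Em : PicW
  /-- The class of the exceptional divisor `E₊ = π₊⁻¹(Z₊)`. -/
  Ep : PicW
  /-- The type `(m₋, m₊)` of the bispecial transformation. -/
  mm : ℤ
  mp : ℤ
  mm_pos : 0 < mm
  mp_pos : 0 < mp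
  /-- The defining linear equivalence `π₊*H₊ ~ m₋·π₋*H₋ − E₋`. -/
  relm : pullp Hp = mm • pullm Hm - Em
  /-- The defining linear equivalence `π₋*H₋ ~ m₊·π₊*H₊ − E₊`. -/
  relp : pullm Hm = mp • pullp Hp - Ep

attribute [instance] BispecialTransformation.grpW
  BispecialTransformation.grpYm BispecialTransformation.grpYp

/-- A bispecial transformation together with the numerical curve-class data of
its resolution: the groups of numerical classes of curves on `W`, `Y₋`, `Y₊`,
the intersection pairings, the pushforwards `π_±{}_*`, and the classes
`e_±` of lines in the nontrivial fibers of `π_±` (i.e. lines in the fibers of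
`E_± → Z_±`). -/
structure BispecialWithCurves extends BispecialTransformation where
  /-- Numerical classes of `1`-cycles on `W`. -/
  CurvW : Type
  /-- Numerical classes of `1`-cycles on `Y₋`. -/
  CurvYm : Type
  /-- Numerical classes of `1`-cycles on `Y₊`. -/
  CurvYp : Type
  [cW : AddCommGroup CurvW]
  [cYm : AddCommGroup CurvYm]
  [cYp : AddCommGroup CurvYp]
  /-- The intersection pairing on `W`. -/
  interW : PicW →+ CurvW →+ ℤ
  /-- The intersection pairing on `Y₋`. -/
  interYm : PicYm →+ CurvYm →+ ℤ
  /-- The intersection pairing on `Y₊`. -/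
  interYp : PicYp →+ CurvYp →+ ℤ
  /-- Pushforward of curve classes along `π₋`. -/
  pushm : CurvW →+ CurvYm
  /-- Pushforward of curve classes along `π₊`. -/
  pushp : CurvW →+ CurvYp
  /-- The projection formula for `π₋`. -/
  projFormula_m : ∀ (D : PicYm) (c : CurvW), interW (pullm D) c = interYm D (pushm c)
  /-- The projection formula for `π₊`. -/
  projFormula_p : ∀ (D : PicYp) (c : CurvW), interW (pullp D) c = interYp D (pushp c)
  /-- The class `[e₋]` of a line in a nontrivial fiber of `π₋`. -/
  em : CurvW
  /-- The class `[e₊]` of a line in a nontrivial fiber of `π₊`. -/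
  ep : CurvW
  /-- `e_±` is contracted by `π_±`, so `π_±*H_±` has degree `0` on it. -/
  fib_m : interW (pullm Hm) em = 0
  fib_p : interW (pullp Hp) ep = 0
  /-- The exceptional divisor `E_±` has degree `−1` on `e_±`. -/
  exc_m : interW Em em = -1
  exc_p : interW Ep ep = -1

attribute [instance] BispecialWithCurves.cW
  BispecialWithCurves.cYm BispecialWithCurves.cYp

/-!
Intersecting `π₋*H₋ ~ m₊·π₊*H₊ − E₊` with a line `e₊` in a fiber of `π₊` gives
`H₋·ℓ₋ = m₊·0 + 1 = 1` by the projection formula, and symmetrically `H₊·ℓ₊ = 1`.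
On a group isomorphic to `ℤ` a nonzero functional is injective, so a class of degree `1`
for it generates the group.
-/

namespace AddMonoidHom

variable {A : Type*} [AddCommGroup A]

theorem injective_of_ne_zero_of_addEquiv_int (φ : A ≃+ ℤ) {f : A →+ ℤ} (hf : f ≠ 0) :
    Function.Injective f := by
  set c := f (φ.symm 1)
  have hf_apply : ∀ x, f x = φ x * c := fun x => by
    conv_lhs => rw [← φ.symm_apply_apply x, ← mul_one (φ x), ← smul_eq_mul, map_zsmul,
      map_zsmul, smul_eq_mul]
  have hc : c ≠ 0 := fun hc => hf (AddMonoidHom.ext fun x => by simp [hf_apply, hc])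
  intro x y hxy
  rw [hf_apply, hf_apply] at hxy
  exact φ.injective (mul_right_cancel₀ hc hxy)

theorem eq_apply_zsmul_of_injective {f : A →+ ℤ} (hf : Function.Injective f) {a : A}
    (ha : f a = 1) (x : A) : x = f x • a :=
  hf (by rw [map_zsmul, ha, smul_eq_mul, mul_one])

theorem exists_eq_zsmul_of_apply_eq_one (φ : A ≃+ ℤ) (f : A →+ ℤ) {a : A} (ha : f a = 1)
    (x : A) : ∃ k : ℤ, x = k • a := by
  have hf : f ≠ 0 := fun h => by simp [h] at ha
  exact ⟨f x, eq_apply_zsmul_of_injective (injective_of_ne_zero_of_addEquiv_int φ hf) ha x⟩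

end AddMonoidHom

namespace BispecialWithCurves

variable (B : BispecialWithCurves)

theorem interYm_Hm_pushm_ep : B.interYm B.Hm (B.pushm B.ep) = 1 := by
  rw [← B.projFormula_m, B.relp, map_sub, map_zsmul, AddMonoidHom.sub_apply,
    AddMonoidHom.smul_apply, B.fib_p, B.exc_p, smul_zero, zero_sub, neg_neg]

theorem interYp_Hp_pushp_em : B.interYp B.Hp (B.pushp B.em) = 1 := by
  rw [← B.projFormula_p, B.relm, map_sub, map_zsmul, AddMonoidHom.sub_apply,
    AddMonoidHom.smul_apply, B.fib_m, B.exc_m, smul_zero, zero_sub, neg_neg]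

end BispecialWithCurves

/-- **Remark 4.3 of the paper.**  Let `ψ` be a bispecial transformation of
type `(m₋, m₊)` between `(Y₋, H₋)` and `(Y₊, H₊)`.  If `Pic(Y₋)` and
`Pic(Y₊)` have rank one (`≅ ℤ`), then `H₋` and `H₊` are the ample generators
of the respective Picard groups; more precisely, denoting by `[e_±]` the
numerical class of a line in a nontrivial fiber of `π_±` and by
`[ℓ_∓] = π_∓{}_*[e_±]` the class of its image in `Y_∓`, one has
`[ℓ_∓]·H_∓ = 1`. -/
theorem bispecial_polarizations_are_ample_generators (B : BispecialWithCurves)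
    (hrkm : Nonempty (B.PicYm ≃+ ℤ)) (hrkp : Nonempty (B.PicYp ≃+ ℤ)) :
    B.interYm B.Hm (B.pushm B.ep) = 1 ∧
    B.interYp B.Hp (B.pushp B.em) = 1 ∧
    (∀ M : B.PicYm, ∃ k : ℤ, M = k • B.Hm) ∧
    (∀ M : B.PicYp, ∃ k : ℤ, M = k • B.Hp) := by
  obtain ⟨φm⟩ := hrkm
  obtain ⟨φp⟩ := hrkp
  exact ⟨B.interYm_Hm_pushm_ep, B.interYp_Hp_pushp_em,
    AddMonoidHom.exists_eq_zsmul_of_apply_eq_one φm (B.interYm.flip (B.pushm B.ep))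
      B.interYm_Hm_pushm_ep,
    AddMonoidHom.exists_eq_zsmul_of_apply_eq_one φp (B.interYp.flip (B.pushp B.em))
      B.interYp_Hp_pushp_em⟩
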